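/- arXiv:1512.04726 — 10 statements merged into one kernel-verified Lean document; each statement's English description precedes it below -/
import Mathlib

section
/- A typical compact set in K([0,1]^d) (with the Hausdorff metric) does not contain a similar copy of a given set P of three distinct points; i.e., the collection of compact sets K ⊆ [0,1]^d containing three distinct points similar to P is of first category in K([0,1]^d). -/
/-!
A triangle similar to `{p₁, p₂, p₃}` has, at the vertex corresponding to some `a`, adjacent
sides in the ratio `dist a b : dist a c`. Hence the sets in question are covered by countably
many families of compacts containing a triple `x, y, z` with pairwise distances `≥ r` and
`dist x y * v = dist x z * u`. Each family is closed, because such triples form a closed subset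
of `X³`. Its complement is dense: approximate a compact set by a finite net and move the net a
small step `t` along segments towards a configuration on a coordinate axis in which no such ratio
occurs. For each triple of points the bad values of `t` are the roots of a quadratic polynomial
that does not vanish at `t = 1`, so almost every small step works.
-/

/-- The unit cube `[0,1]^d` as a subtype of `ℝ^d`. -/
def UnitCube (d : ℕ) : Type := {x : EuclideanSpace ℝ (Fin d) // ∀ i, x i ∈ Set.Icc (0 : ℝ) 1}

noncomputable instance (d : ℕ) : MetricSpace (UnitCube d) :=
  Subtype.metricSpace

open Metric Set Filter Topology TopologicalSpace

section InnerProductSpace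

variable {E : Type*} [NormedAddCommGroup E] [InnerProductSpace ℝ E]

lemma norm_add_smul_sq (x y : E) (t : ℝ) :
    ‖x + t • y‖ ^ 2 = ‖y‖ ^ 2 * t ^ 2 + 2 * inner ℝ x y * t + ‖x‖ ^ 2 := by
  rw [norm_add_sq_real, inner_smul_right, norm_smul, Real.norm_eq_abs, mul_pow, sq_abs]
  ring

open Polynomial in
lemma finite_setOf_norm_add_smul_mul_eq {x y x' y' : E} {u v t₀ : ℝ} (hu : 0 ≤ u) (hv : 0 ≤ v)
    (ht₀ : ‖x + t₀ • y‖ * v ≠ ‖x' + t₀ • y'‖ * u) :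
    {t : ℝ | ‖x + t • y‖ * v = ‖x' + t • y'‖ * u}.Finite := by
  set p : ℝ[X] := (C (‖y‖ ^ 2) * X ^ 2 + C (2 * inner ℝ x y) * X + C (‖x‖ ^ 2)) * C (v ^ 2)
    - (C (‖y'‖ ^ 2) * X ^ 2 + C (2 * inner ℝ x' y') * X + C (‖x'‖ ^ 2)) * C (u ^ 2)
  have hp (t : ℝ) : p.eval t = (‖x + t • y‖ * v) ^ 2 - (‖x' + t • y'‖ * u) ^ 2 := by
    simp only [p, eval_sub, eval_mul, eval_add, eval_C, eval_pow, eval_X, mul_pow,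
      norm_add_smul_sq]
  have hp₀ : p ≠ 0 := fun h => ht₀ <| by
    have := hp t₀
    rwa [h, eval_zero, eq_comm, sub_eq_zero, sq_eq_sq₀ (by positivity) (by positivity)] at this
  refine (finite_setOfPred_isRoot hp₀).subset fun t (ht : _ = _) => ?_
  rw [mem_ofPred_eq, IsRoot.def, hp, ht, sub_self]

lemma dist_lineMap_lineMap_eq_norm (a₀ a₁ b₀ b₁ : E) (t : ℝ) :
    dist (AffineMap.lineMap a₀ a₁ t) (AffineMap.lineMap b₀ b₁ t) =
      ‖(a₀ - b₀) + t • ((a₁ - b₁) - (a₀ - b₀))‖ := by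
  rw [dist_eq_norm, AffineMap.lineMap_apply_module, AffineMap.lineMap_apply_module]
  congr 1
  module

end InnerProductSpace

section MetricSpace

variable {X : Type*} [MetricSpace X] {u v r : ℝ}

def RatioFree (u v : ℝ) (s : Set X) : Prop :=
  ∀ x ∈ s, ∀ y ∈ s, ∀ z ∈ s, x ≠ y → x ≠ z → y ≠ z → dist x y * v ≠ dist x z * u

/-- The lower bound `r` on the distances keeps degenerate triples out and makes the set closed. -/
def ratioTriples (u v r : ℝ) : Set (X × X × X) :=
  {w | r ≤ dist w.1 w.2.1 ∧ r ≤ dist w.1 w.2.2 ∧ r ≤ dist w.2.1 w.2.2 ∧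
    dist w.1 w.2.1 * v = dist w.1 w.2.2 * u}

lemma ratioFree_range_iff {ι : Type*} {f : ι → X} :
    RatioFree u v (range f) ↔ ∀ i j k, f i ≠ f j → f i ≠ f k → f j ≠ f k →
      dist (f i) (f j) * v ≠ dist (f i) (f k) * u := by
  simp only [RatioFree, forall_mem_range]

lemma ratioFree_of_subsingleton [Subsingleton X] (s : Set X) : RatioFree u v s :=
  fun x _ y _ _ _ hxy => absurd (Subsingleton.elim x y) hxy

lemma Isometry.ratioFree_image {Y : Type*} [MetricSpace Y] {φ : X → Y} (hφ : Isometry φ)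
    {s : Set X} (h : RatioFree u v s) : RatioFree u v (φ '' s) := by
  rintro _ ⟨x, hx, rfl⟩ _ ⟨y, hy, rfl⟩ _ ⟨z, hz, rfl⟩ hxy hxz hyz
  rw [hφ.dist_eq, hφ.dist_eq]
  exact h x hx y hy z hz (ne_of_apply_ne φ hxy) (ne_of_apply_ne φ hxz) (ne_of_apply_ne φ hyz)

lemma RatioFree.notMem_ratioTriples {s : Set X} (h : RatioFree u v s) (hr : 0 < r)
    {w : X × X × X} (h₁ : w.1 ∈ s) (h₂ : w.2.1 ∈ s) (h₃ : w.2.2 ∈ s) :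
    w ∉ ratioTriples u v r := fun ⟨hxy, hxz, hyz, hw⟩ =>
  h _ h₁ _ h₂ _ h₃ (dist_pos.1 (hr.trans_le hxy)) (dist_pos.1 (hr.trans_le hxz))
    (dist_pos.1 (hr.trans_le hyz)) hw

lemma isClosed_ratioTriples (u v r : ℝ) : IsClosed (ratioTriples (X := X) u v r) := by
  simp only [ratioTriples, ofPred_and]
  refine (isClosed_le ?_ ?_).inter <| (isClosed_le ?_ ?_).inter <|
    (isClosed_le ?_ ?_).inter (isClosed_eq ?_ ?_) <;> fun_prop

namespace TopologicalSpace.NonemptyCompacts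

lemma exists_dist_lt_of_dist_lt {E F : NonemptyCompacts X} {δ : ℝ} (h : dist E F < δ) {x : X}
    (hx : x ∈ E) : ∃ y ∈ F, dist x y < δ :=
  exists_dist_lt_of_hausdorffDist_lt hx h <| hausdorffEDist_ne_top_of_nonempty_of_bounded
    E.nonempty F.nonempty E.isCompact.isBounded F.isCompact.isBounded

lemma isClosed_setOf_exists_triple_mem {C : Set (X × X × X)} (hC : IsClosed C) :
    IsClosed {E : NonemptyCompacts X | ∃ w ∈ C, w.1 ∈ E ∧ w.2.1 ∈ E ∧ w.2.2 ∈ E} := by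
  rw [← isOpen_compl_iff, Metric.isOpen_iff]
  intro F hF
  have hFC : (F ×ˢ F ×ˢ F : Set (X × X × X)) ⊆ Cᶜ := fun w ⟨h₁, h₂, h₃⟩ hw =>
    hF ⟨w, hw, h₁, h₂, h₃⟩
  obtain ⟨δ, hδ, hthick⟩ :=
    (F.isCompact.prod (F.isCompact.prod F.isCompact)).exists_thickening_subset_open
      hC.isOpen_compl hFC
  refine ⟨δ, hδ, fun G hG ⟨w, hw, h₁, h₂, h₃⟩ => ?_⟩
  obtain ⟨a, ha, hwa⟩ := exists_dist_lt_of_dist_lt (mem_ball.1 hG) h₁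
  obtain ⟨b, hb, hwb⟩ := exists_dist_lt_of_dist_lt (mem_ball.1 hG) h₂
  obtain ⟨c, hc, hwc⟩ := exists_dist_lt_of_dist_lt (mem_ball.1 hG) h₃
  refine hthick (mem_thickening_iff.2 ⟨(a, b, c), ⟨ha, hb, hc⟩, ?_⟩) hw
  simp only [Prod.dist_eq, max_lt_iff]
  exact ⟨hwa, hwb, hwc⟩

lemma dense_setOf_of_exists_near {p : Set X → Prop}
    (h : ∀ s : Set X, s.Finite → ∀ ε > 0, ∃ f : s → X, (∀ i, dist (f i) i < ε) ∧ p (range f)) :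
    Dense {E : NonemptyCompacts X | p E} := by
  rw [Metric.dense_iff]
  intro E ε hε
  obtain ⟨s, hsE, hs, hcover⟩ := E.isCompact.finite_cover_balls (div_pos hε three_pos)
  obtain ⟨f, hf, hp⟩ := h s hs (ε / 3) (div_pos hε three_pos)
  have : Finite s := hs
  have : Nonempty s := by
    obtain ⟨x, hx⟩ := E.nonempty
    obtain ⟨y, hy, -⟩ := mem_iUnion₂.1 (hcover hx)
    exact ⟨⟨y, hy⟩⟩
  refine ⟨⟨⟨range f, (finite_range f).isCompact⟩, range_nonempty f⟩, ?_, hp⟩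
  rw [mem_ball, dist_comm, NonemptyCompacts.dist_eq]
  refine (hausdorffDist_le_of_mem_dist (r := 2 * ε / 3) (by positivity) ?_ ?_).trans_lt
    (by linarith)
  · intro x hx
    obtain ⟨y, hy, hxy⟩ := mem_iUnion₂.1 (hcover hx)
    refine ⟨f ⟨y, hy⟩, mem_range_self _, ?_⟩
    linarith [dist_triangle_right x (f ⟨y, hy⟩) y, mem_ball.1 hxy, hf ⟨y, hy⟩]
  · rintro _ ⟨i, rfl⟩
    exact ⟨i, hsE i.2, by linarith [hf i]⟩

end TopologicalSpace.NonemptyCompacts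

end MetricSpace

section Real

variable {u v : ℝ}

lemma finite_setOf_dist_mul_eq_dist_mul {b c : ℝ} (hbc : b ≠ c) (hu : 0 < u) (hv : 0 < v) :
    {x : ℝ | dist x b * v = dist x c * u}.Finite ∧
    {x : ℝ | dist b x * v = dist b c * u}.Finite ∧
    {x : ℝ | dist b c * v = dist b x * u}.Finite := by
  have hbc' : 0 < dist b c := dist_pos.2 hbc
  refine ⟨?_, ?_, ?_⟩
  · refine (finite_setOf_norm_add_smul_mul_eq (x := -b) (y := 1) (x' := -c) (y' := 1) (t₀ := b)
      hu.le hv.le ?_).subset fun x (hx : _ = _) => ?_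
    · simpa [Real.dist_eq, neg_add_eq_sub, abs_sub_comm, hbc'.ne', hu.ne'] using hbc'
    · simpa [Real.dist_eq, neg_add_eq_sub] using hx
  · refine (finite_setOf_norm_add_smul_mul_eq (x := b) (y := -1) (x' := b - c) (y' := 0) (t₀ := b)
      hu.le hv.le ?_).subset fun x (hx : _ = _) => ?_
    · simpa [Real.dist_eq, hbc'.ne', hu.ne'] using hbc'
    · simpa [Real.dist_eq, ← sub_eq_add_neg] using hx
  · refine (finite_setOf_norm_add_smul_mul_eq (x := b - c) (y := 0) (x' := b) (y' := -1) (t₀ := b)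
      hu.le hv.le ?_).subset fun x (hx : _ = _) => ?_
    · simpa [Real.dist_eq, hbc'.ne', hv.ne'] using hbc'
    · simpa [Real.dist_eq, ← sub_eq_add_neg] using hx

lemma RatioFree.exists_insert {s : Finset ℝ} (hs : RatioFree u v (s : Set ℝ)) (hu : 0 < u)
    (hv : 0 < v) {a b : ℝ} (hab : a < b) :
    ∃ x ∈ Icc a b, x ∉ s ∧ RatioFree u v (insert x (s : Set ℝ)) := by
  set B : Set ℝ := ↑s ∪ ⋃ p ∈ s.offDiag, ({x | dist x p.1 * v = dist x p.2 * u} ∪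
    {x | dist p.1 x * v = dist p.1 p.2 * u} ∪ {x | dist p.1 p.2 * v = dist p.1 x * u})
  have hB : B.Finite := s.finite_toSet.union <| s.offDiag.finite_toSet.biUnion fun p hp =>
    have h := finite_setOf_dist_mul_eq_dist_mul (Finset.mem_offDiag.1 hp).2.2 hu hv
    (h.1.union h.2.1).union h.2.2
  obtain ⟨x, hx, hxB⟩ := ((Icc_infinite hab).sdiff hB).nonempty
  have havoid (y z : ℝ) (hy : y ∈ s) (hz : z ∈ s) (hyz : y ≠ z) :
      dist x y * v ≠ dist x z * u ∧ dist y x * v ≠ dist y z * u ∧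
        dist y z * v ≠ dist y x * u := by
    have : x ∉ _ := fun h => hxB (Or.inr (mem_biUnion (x := (y, z))
      (Finset.mem_offDiag.2 ⟨hy, hz, hyz⟩) h))
    simp only [mem_union, mem_ofPred_eq, not_or] at this
    exact ⟨this.1.1, this.1.2, this.2⟩
  refine ⟨x, hx, fun h => hxB (Or.inl h), ?_⟩
  rintro y (rfl | hy) z (rfl | hz) w (rfl | hw) hyz hyw hzw
  · exact absurd rfl hyz
  · exact absurd rfl hyz
  · exact absurd rfl hyw
  · exact (havoid z w hz hw hzw).1
  · exact absurd rfl hzw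
  · exact (havoid y w hy hw hyw).2.1
  · exact (havoid y z hy hz hyz).2.2
  · exact hs y hy z hz w hw hyz hyw hzw

lemma exists_finset_ratioFree (hu : 0 < u) (hv : 0 < v) (n : ℕ) :
    ∃ s : Finset ℝ, s.card = n ∧ (s : Set ℝ) ⊆ Icc 0 1 ∧ RatioFree u v (s : Set ℝ) := by
  induction n with
  | zero => exact ⟨∅, rfl, by simp, by simp [RatioFree]⟩
  | succ n ih =>
    obtain ⟨s, hcard, hsub, hs⟩ := ih
    obtain ⟨x, hx, hxs, hfree⟩ := hs.exists_insert hu hv zero_lt_one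
    refine ⟨insert x s, by rw [Finset.card_insert_of_notMem hxs, hcard], ?_, ?_⟩
    · rw [Finset.coe_insert]
      exact insert_subset hx hsub
    · rwa [Finset.coe_insert]

lemma exists_injective_ratioFree (ι : Type*) [Finite ι] (hu : 0 < u) (hv : 0 < v) :
    ∃ g : ι → ℝ, Function.Injective g ∧ range g ⊆ Icc 0 1 ∧ RatioFree u v (range g) := by
  obtain ⟨s, hcard, hsub, hs⟩ := exists_finset_ratioFree hu hv (Nat.card ι)
  let e : ι ≃ s := (Finite.equivFin ι).trans (Finset.equivFinOfCardEq hcard).symm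
  have hrange : range (fun i => (e i : ℝ)) = s := by
    ext x
    exact ⟨fun ⟨i, hi⟩ => hi ▸ (e i).2, fun hx => ⟨e.symm ⟨x, hx⟩, by simp⟩⟩
  exact ⟨fun i => e i, Subtype.val_injective.comp e.injective, hrange ▸ hsub, hrange ▸ hs⟩

end Real

section Perturbation

variable {E : Type*} [NormedAddCommGroup E] [InnerProductSpace ℝ E] {u v : ℝ}

lemma eventually_cofinite_ratioFree_lineMap {ι : Type*} [Finite ι] (q : ι → E) {g : ι → E}
    (hg : Function.Injective g) (hfree : RatioFree u v (range g)) (hu : 0 ≤ u) (hv : 0 ≤ v) :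
    ∀ᶠ t : ℝ in cofinite, RatioFree u v (range fun i => AffineMap.lineMap (q i) (g i) t) := by
  have key (i j k : ι) (hij : i ≠ j) (hik : i ≠ k) (hjk : j ≠ k) : ∀ᶠ t : ℝ in cofinite,
      dist (AffineMap.lineMap (q i) (g i) t) (AffineMap.lineMap (q j) (g j) t) * v ≠
        dist (AffineMap.lineMap (q i) (g i) t) (AffineMap.lineMap (q k) (g k) t) * u := by
    simp only [eventually_cofinite, not_not, dist_lineMap_lineMap_eq_norm]
    refine finite_setOf_norm_add_smul_mul_eq (t₀ := 1) hu hv ?_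
    simpa [dist_eq_norm] using
      ratioFree_range_iff.1 hfree i j k (hg.ne hij) (hg.ne hik) (hg.ne hjk)
  filter_upwards [eventually_all.2 fun i => eventually_all.2 fun j => eventually_all.2 fun k =>
    eventually_imp_distrib_left.2 fun hij => eventually_imp_distrib_left.2 fun hik =>
      eventually_imp_distrib_left.2 (key i j k hij hik)] with t ht
  exact ratioFree_range_iff.2 fun i j k hij hik hjk =>
    ht i j k (fun h => hij (h ▸ rfl)) (fun h => hik (h ▸ rfl)) (fun h => hjk (h ▸ rfl))

end Perturbation

section UnitCube

variable {d : ℕ} {u v : ℝ}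

lemma convex_unitCube (d : ℕ) :
    Convex ℝ {x : EuclideanSpace ℝ (Fin d) | ∀ i, x i ∈ Icc (0 : ℝ) 1} :=
  fun _ hx _ hy _ _ ha hb hab i => convex_Icc (0 : ℝ) 1 (hx i) (hy i) ha hb hab

instance : Subsingleton (UnitCube 0) := ⟨fun _ _ => Subtype.ext (Subsingleton.elim _ _)⟩

lemma exists_injective_ratioFree_unitCube (hd : 0 < d) (ι : Type*) [Finite ι] (hu : 0 < u)
    (hv : 0 < v) : ∃ g : ι → EuclideanSpace ℝ (Fin d), Function.Injective g ∧
      (∀ i, ∀ j, g i j ∈ Icc (0 : ℝ) 1) ∧ RatioFree u v (range g) := by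
  obtain ⟨c, hc, hcI, hfree⟩ := exists_injective_ratioFree ι hu hv
  have hsingle : Isometry (EuclideanSpace.single (𝕜 := ℝ) (⟨0, hd⟩ : Fin d)) :=
    Isometry.of_dist_eq fun a b => PiLp.dist_single_same 2 (fun _ => ℝ) _ a b
  refine ⟨fun i => EuclideanSpace.single ⟨0, hd⟩ (c i), hsingle.injective.comp hc, ?_, ?_⟩
  · intro i j
    rw [PiLp.single_apply]
    split_ifs
    exacts [hcI (mem_range_self i), ⟨le_rfl, zero_le_one⟩]
  · rw [range_comp']
    exact hsingle.ratioFree_image hfree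

lemma exists_ratioFree_near_unitCube (hu : 0 < u) (hv : 0 < v) (s : Set (UnitCube d))
    (hs : s.Finite) (ε : ℝ) (hε : 0 < ε) :
    ∃ f : s → UnitCube d, (∀ i, dist (f i) i < ε) ∧ RatioFree u v (range f) := by
  rcases Nat.eq_zero_or_pos d with rfl | hd
  · exact ⟨(↑), fun i => by simpa using hε, ratioFree_of_subsingleton _⟩
  have : Finite s := hs
  obtain ⟨g, hg, hgI, hfree⟩ := exists_injective_ratioFree_unitCube hd s hu hv
  let q : s → EuclideanSpace ℝ (Fin d) := fun i => (i : UnitCube d).1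
  have hnear : ∀ᶠ t in 𝓝 (0 : ℝ), ∀ i, dist (AffineMap.lineMap (q i) (g i) t) (q i) < ε :=
    eventually_all.2 fun i => AffineMap.lineMap_continuous.tendsto' 0 (q i)
      (AffineMap.lineMap_apply_zero _ _) (ball_mem_nhds _ hε)
  have hfree' := (eventually_cofinite_ratioFree_lineMap q hg hfree hu.le hv.le).filter_mono
    ((nhdsGT_le_nhdsNE 0).trans (nhdsNE_le_cofinite 0))
  obtain ⟨t, hfree_t, hnear_t, ht⟩ := (hfree'.and ((hnear.filter_mono nhdsWithin_le_nhds).and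
    (Ioc_mem_nhdsGT zero_lt_one))).exists
  refine ⟨fun i => ⟨AffineMap.lineMap (q i) (g i) t, (convex_unitCube d).lineMap_mem
    (i : UnitCube d).2 (hgI i) ⟨ht.1.le, ht.2⟩⟩, hnear_t, ?_⟩
  exact ratioFree_range_iff.2 fun i j k hij hik hjk => ratioFree_range_iff.1 hfree_t i j k
    (fun h => hij (Subtype.ext h)) (fun h => hik (Subtype.ext h)) (fun h => hjk (Subtype.ext h))

end UnitCube

lemma isNowhereDense_setOf_exists_ratioTriples_mem {d : ℕ} {u v r : ℝ} (hu : 0 < u) (hv : 0 < v)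
    (hr : 0 < r) : IsNowhereDense {E : NonemptyCompacts (UnitCube d) |
      ∃ w ∈ ratioTriples u v r, w.1 ∈ E ∧ w.2.1 ∈ E ∧ w.2.2 ∈ E} := by
  rw [(NonemptyCompacts.isClosed_setOf_exists_triple_mem
    (isClosed_ratioTriples u v r)).isNowhereDense_iff, interior_eq_empty_iff_dense_compl]
  refine (NonemptyCompacts.dense_setOf_of_exists_near (p := RatioFree u v)
    fun s hs => exists_ratioFree_near_unitCube hu hv s hs).mono ?_
  rintro E hE ⟨w, hw, h₁, h₂, h₃⟩
  exact hE.notMem_ratioTriples hr h₁ h₂ h₃ hw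

lemma exists_mem_ratioTriples_of_image_eq {V X : Type*} [NormedAddCommGroup V] [NormedSpace ℝ V]
    [MetricSpace X] {ι : X → V} (hι : Isometry ι) {P : Set V} {x y z : X} (hxy : x ≠ y)
    (hxz : x ≠ z) (hyz : y ≠ z) {r : ℝ} (hr : 0 < r) (φ : V ≃ᵢ V)
    (hφ : φ '' ((fun w => r • w) '' P) = {ι x, ι y, ι z}) :
    ∃ n : ℕ, ∃ a ∈ P, ∃ b ∈ P \ {a}, ∃ c ∈ P \ {a},
      (x, y, z) ∈ ratioTriples (dist a b) (dist a c) (1 / (n + 1)) := by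
  rw [image_image] at hφ
  have hmem {w : X} (hw : ι w ∈ ({ι x, ι y, ι z} : Set V)) : ∃ a ∈ P, φ (r • a) = ι w := by
    rwa [← hφ] at hw
  obtain ⟨a, ha, hax⟩ := hmem (w := x) (by simp)
  obtain ⟨b, hb, hby⟩ := hmem (w := y) (by simp)
  obtain ⟨c, hc, hcz⟩ := hmem (w := z) (by simp)
  have hdist {w w' : X} {e e' : V} (he : φ (r • e) = ι w) (he' : φ (r • e') = ι w') :
      dist w w' = r * dist e e' := by
    rw [← hι.dist_eq, ← he, ← he', φ.dist_eq, dist_smul₀, Real.norm_of_nonneg hr.le]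
  obtain ⟨n, hn⟩ := exists_nat_one_div_lt
    (lt_min (dist_pos.2 hxy) (lt_min (dist_pos.2 hxz) (dist_pos.2 hyz)))
  simp only [lt_min_iff] at hn
  refine ⟨n, a, ha, b, ⟨hb, fun (h : b = a) => hxy (hι.injective ?_)⟩,
    c, ⟨hc, fun (h : c = a) => hxz (hι.injective ?_)⟩, hn.1.le, hn.2.1.le, hn.2.2.le, ?_⟩
  · rw [← hax, ← hby, h]
  · rw [← hax, ← hcz, h]
  · dsimp only
    rw [hdist hax hby, hdist hax hcz]
    ring

theorem stmt6_general (d : ℕ) (p₁ p₂ p₃ : EuclideanSpace ℝ (Fin d)) :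
    IsMeagre {E : TopologicalSpace.NonemptyCompacts (UnitCube d) |
      ∃ x y z : UnitCube d, x ∈ E ∧ y ∈ E ∧ z ∈ E ∧ x ≠ y ∧ x ≠ z ∧ y ≠ z ∧
        ∃ r : ℝ, 0 < r ∧
          ∃ φ : EuclideanSpace ℝ (Fin d) ≃ᵢ EuclideanSpace ℝ (Fin d),
            φ '' ((fun w => r • w) '' ({p₁, p₂, p₃} : Set (EuclideanSpace ℝ (Fin d)))) =
              {x.1, y.1, z.1}} := by
  set P : Set (EuclideanSpace ℝ (Fin d)) := {p₁, p₂, p₃}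
  have hP : P.Countable := (toFinite P).countable
  refine IsMeagre.mono (s := ⋃ (n : ℕ) (a ∈ P) (b ∈ P \ {a}) (c ∈ P \ {a}),
      {E : NonemptyCompacts (UnitCube d) | ∃ w ∈ ratioTriples (dist a b) (dist a c) (1 / (n + 1)),
        w.1 ∈ E ∧ w.2.1 ∈ E ∧ w.2.2 ∈ E}) ?_ <|
    isMeagre_iUnion fun n => isMeagre_biUnion hP fun a _ =>
      isMeagre_biUnion (hP.mono sdiff_subset) fun b hb => isMeagre_biUnion (hP.mono sdiff_subset)
        fun c hc => (isNowhereDense_setOf_exists_ratioTriples_mem (dist_pos.2 (Ne.symm hb.2))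
          (dist_pos.2 (Ne.symm hc.2)) Nat.one_div_pos_of_nat).isMeagre
  rintro E ⟨x, y, z, hx, hy, hz, hxy, hxz, hyz, r, hr, φ, hφ⟩
  obtain ⟨n, a, ha, b, hb, c, hc, hw⟩ :=
    exists_mem_ratioTriples_of_image_eq isometry_subtype_coe hxy hxz hyz hr φ hφ
  simp only [mem_iUnion]
  exact ⟨n, a, ha, b, hb, c, hc, _, hw, hx, hy, hz⟩

theorem stmt6 (d : ℕ) (p₁ p₂ p₃ : EuclideanSpace ℝ (Fin d))
    (h12 : p₁ ≠ p₂) (h13 : p₁ ≠ p₃) (h23 : p₂ ≠ p₃) :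
    IsMeagre {E : TopologicalSpace.NonemptyCompacts (UnitCube d) |
      ∃ x y z : UnitCube d, x ∈ E ∧ y ∈ E ∧ z ∈ E ∧ x ≠ y ∧ x ≠ z ∧ y ≠ z ∧
        ∃ r : ℝ, 0 < r ∧
          ∃ φ : EuclideanSpace ℝ (Fin d) ≃ᵢ EuclideanSpace ℝ (Fin d),
            φ '' ((fun w => r • w) '' ({p₁, p₂, p₃} : Set (EuclideanSpace ℝ (Fin d)))) =
              {x.1, y.1, z.1}} :=
  stmt6_general d p₁ p₂ p₃
end

section
/- A set A ⊆ [0,1]^d is nowhere dense in [0,1]^d if and only if K_A = {E ∈ K([0,1]^d) : E ∩ A ≠ ∅} is nowhere dense in K([0,1]^d) with the Hausdorff metric. -/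
/-!
The Hausdorff metric on `NonemptyCompacts α` induces the Vietoris topology, and the
statement holds for that topology over any space `α`. The hitting set of `closure A` is closed and
every compact set meeting `closure A` is a limit of `K ⊔ {a}` with `a ∈ A`, so taking closures
commutes with taking hitting sets. An open `U ⊆ C` gives the open set `{K | K ⊆ U}` inside the
hitting set of `C`; conversely, if `Cᶜ` is dense then the finite subsets of `Cᶜ` are dense and miss
the hitting set of `C`.
-/

open Set

namespace TopologicalSpace.NonemptyCompacts

variable {α : Type*} [TopologicalSpace α]

theorem closure_setOfPred_inter_nonempty (A : Set α) :
    closure {K : NonemptyCompacts α | (↑K ∩ A).Nonempty} =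
      {K : NonemptyCompacts α | (↑K ∩ closure A).Nonempty} := by
  refine subset_antisymm
    (closure_minimal (fun K ⟨x, hxK, hxA⟩ => ⟨x, hxK, subset_closure hxA⟩)
      (isClosed_inter_nonempty_of_isClosed isClosed_closure)) ?_
  rintro K ⟨x, hxK, hxA⟩
  have hK : K ⊔ {x} = K := SetLike.coe_injective <| by simpa [coe_sup] using hxK
  rw [← hK]
  exact map_mem_closure (f := fun y => K ⊔ {y}) (by fun_prop) hxA
    fun a ha => ⟨a, by simp [coe_sup], ha⟩

theorem interior_setOfPred_inter_nonempty_eq_empty_iff {C : Set α} :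
    interior {K : NonemptyCompacts α | (↑K ∩ C).Nonempty} = ∅ ↔ interior C = ∅ := by
  constructor
  · intro h
    by_contra hC
    obtain ⟨x, hx⟩ := nonempty_iff_ne_empty.2 hC
    refine (nonempty_iff_ne_empty.1 ⟨{x}, ?_⟩) h
    refine mem_interior.2 ⟨_, fun K hK => ?_, isOpen_subsets_of_isOpen isOpen_interior, by simpa⟩
    obtain ⟨y, hy⟩ := K.nonempty
    exact ⟨y, hy, interior_subset (hK hy)⟩
  · intro h
    rw [interior_eq_empty_iff_dense_compl] at h ⊢
    have hfin : Dense {K : NonemptyCompacts α | (K : Set α).Finite ∧ ↑K ⊆ Cᶜ} := by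
      simp [Dense, closure_finite_subsets, h.closure_eq]
    exact hfin.mono fun K hK ⟨y, hyK, hyC⟩ => hK.2 hyK hyC

theorem isNowhereDense_setOfPred_inter_nonempty_iff {A : Set α} :
    IsNowhereDense {K : NonemptyCompacts α | (↑K ∩ A).Nonempty} ↔ IsNowhereDense A := by
  rw [IsNowhereDense, closure_setOfPred_inter_nonempty,
    interior_setOfPred_inter_nonempty_eq_empty_iff, IsNowhereDense]

end TopologicalSpace.NonemptyCompacts

theorem stmt9 (d : ℕ) (A : Set (UnitCube d)) :
    IsNowhereDense A ↔
      IsNowhereDense {E : TopologicalSpace.NonemptyCompacts (UnitCube d) |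
        ((E : Set (UnitCube d)) ∩ A).Nonempty} :=
  TopologicalSpace.NonemptyCompacts.isNowhereDense_setOfPred_inter_nonempty_iff.symm
end

section
/- If A ⊆ [0,1]^d is of first category in [0,1]^d, then K_A = {E ∈ K([0,1]^d) : E ∩ A ≠ ∅} is of first category in K([0,1]^d); consequently a typical compact set in K([0,1]^d) is disjoint from A. -/
/-!
For closed `F`, the compacts meeting `F` form a closed set in the Vietoris topology, and if `F` has
empty interior its complement contains the finite subsets of the dense set `Fᶜ`, which are dense.
So it is nowhere dense; covering a meagre `A` by countably many nowhere dense sets finishes.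
-/

open Set

namespace TopologicalSpace.NonemptyCompacts

variable {X : Type*} [TopologicalSpace X]

theorem dense_setOf_subset {U : Set X} (hU : Dense U) :
    Dense {K : NonemptyCompacts X | (K : Set X) ⊆ U} := by
  have hfin : Dense {K : NonemptyCompacts X | (K : Set X).Finite ∧ (K : Set X) ⊆ U} := by
    simp only [dense_iff_closure_eq, closure_finite_subsets, hU.closure_eq, subset_univ,
      ofPred_true]
  exact hfin.mono fun _ hK => hK.2

theorem isNowhereDense_setOf_inter_nonempty_of_isClosed {F : Set X} (hF : IsClosed F)
    (hF' : interior F = ∅) :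
    IsNowhereDense {K : NonemptyCompacts X | ((K : Set X) ∩ F).Nonempty} := by
  rw [(isClosed_inter_nonempty_of_isClosed hF).isNowhereDense_iff,
    interior_eq_empty_iff_dense_compl]
  convert dense_setOf_subset (interior_eq_empty_iff_dense_compl.mp hF') using 1
  ext K
  simp [subset_compl_iff_disjoint_right, not_nonempty_iff_eq_empty, disjoint_iff_inter_eq_empty]

theorem _root_.IsNowhereDense.setOf_inter_nonempty {s : Set X} (hs : IsNowhereDense s) :
    IsNowhereDense {K : NonemptyCompacts X | ((K : Set X) ∩ s).Nonempty} :=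
  (isNowhereDense_setOf_inter_nonempty_of_isClosed isClosed_closure hs).mono
    fun _ hK => hK.mono (inter_subset_inter_right _ subset_closure)

theorem _root_.IsMeagre.setOf_inter_nonempty {A : Set X} (hA : IsMeagre A) :
    IsMeagre {K : NonemptyCompacts X | ((K : Set X) ∩ A).Nonempty} := by
  obtain ⟨S, hS, hSc, hAS⟩ := isMeagre_iff_countable_union_isNowhereDense.mp hA
  refine (isMeagre_biUnion hSc fun t ht => (hS t ht).setOf_inter_nonempty.isMeagre).mono ?_
  rintro K ⟨x, hxK, hxA⟩
  obtain ⟨t, ht, hxt⟩ := hAS hxA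
  exact mem_biUnion ht ⟨x, hxK, hxt⟩

end TopologicalSpace.NonemptyCompacts

-- The Hausdorff-metric topology on `NonemptyCompacts` is definitionally the Vietoris topology.
theorem stmt10 (d : ℕ) (A : Set (UnitCube d)) (hA : IsMeagre A) :
    IsMeagre {E : TopologicalSpace.NonemptyCompacts (UnitCube d) |
      ((E : Set (UnitCube d)) ∩ A).Nonempty} :=
  hA.setOf_inter_nonempty
end

section
/- The set of compact E ⊆ [0,1] containing some point that is not a Liouville number and not rational is of first category in K([0,1]). -/
open Metric Set TopologicalSpace

/-- If `F` is closed with dense complement in a metric space, then the set of nonempty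
compact sets meeting `F` is nowhere dense in the hyperspace. -/
lemma aux_nowhereDense {X : Type*} [MetricSpace X] {F : Set X} (hF : IsClosed F)
    (hFc : Dense Fᶜ) :
    IsNowhereDense {E : NonemptyCompacts X | ((E : Set X) ∩ F).Nonempty} := by
  set T : Set (NonemptyCompacts X) := {E | ((E : Set X) ∩ F).Nonempty} with hT
  have hclosed : IsClosed T := by
    rw [← isOpen_compl_iff, Metric.isOpen_iff]
    intro E hE
    have hdisj : Disjoint (E : Set X) F := by
      rw [Set.disjoint_iff_inter_eq_empty]
      by_contra h
      exact hE (Set.nonempty_iff_ne_empty.2 h)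
    obtain ⟨δ, hδ, hdisj2⟩ := hdisj.exists_thickenings E.isCompact hF
    refine ⟨δ, hδ, fun E' hE' ↦ ?_⟩
    simp only [Set.mem_compl_iff, hT, Set.mem_setOf_eq]
    rintro ⟨x, hxE', hxF⟩
    have hne : EMetric.hausdorffEdist (E' : Set X) (E : Set X) ≠ ⊤ :=
      Metric.hausdorffEdist_ne_top_of_nonempty_of_bounded E'.nonempty E.nonempty
        E'.isCompact.isBounded E.isCompact.isBounded
    have h1 : Metric.infDist x (E : Set X) < δ := by
      calc Metric.infDist x (E : Set X)
          ≤ Metric.hausdorffDist (E' : Set X) (E : Set X) :=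
            Metric.infDist_le_hausdorffDist_of_mem hxE' hne
        _ < δ := by rwa [← NonemptyCompacts.dist_eq]
    have hxth : x ∈ Metric.thickening δ (E : Set X) :=
      (Metric.mem_thickening_iff_infDist_lt E.nonempty).2 h1
    exact hdisj2.ne_of_mem hxth (Metric.self_subset_thickening hδ F hxF) rfl
  have hint : interior T = ∅ := by
    rw [Set.eq_empty_iff_forall_notMem]
    intro E hE
    rw [mem_interior_iff_mem_nhds, Metric.mem_nhds_iff] at hE
    obtain ⟨ε, hε, hball⟩ := hE
    -- build a finite set close to E avoiding F
    have hε3 : 0 < ε / 3 := by linarith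
    obtain ⟨t, htfin, htcov⟩ := (totallyBounded_iff.1 E.isCompact.totallyBounded) (ε / 3) hε3
    set t' : Set X := {y ∈ t | (Metric.ball y (ε / 3) ∩ (E : Set X)).Nonempty} with ht'
    have ht'fin : t'.Finite := htfin.subset (Set.sep_subset _ _)
    have htcov' : (E : Set X) ⊆ ⋃ y ∈ t', Metric.ball y (ε / 3) := by
      intro x hx
      obtain ⟨y, hy, hxy⟩ := Set.mem_iUnion₂.1 (htcov hx)
      exact Set.mem_iUnion₂.2 ⟨y, ⟨hy, ⟨x, hxy, hx⟩⟩, hxy⟩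
    -- choose points in Fᶜ near points of t'
    have hchoice : ∀ y : X, ∃ z : X, z ∈ Fᶜ ∧ dist z y < ε / 3 := by
      intro y
      obtain ⟨z, hz1, hz2⟩ := hFc.exists_mem_open Metric.isOpen_ball
        ⟨y, Metric.mem_ball_self hε3⟩
      exact ⟨z, hz1, Metric.mem_ball.1 hz2⟩
    choose g hg1 hg2 using hchoice
    set E' : Set X := g '' t' with hE'
    have hE'fin : E'.Finite := ht'fin.image g
    have hE'ne : E'.Nonempty := by
      obtain ⟨x, hx⟩ := E.nonempty
      obtain ⟨y, hy, _⟩ := Set.mem_iUnion₂.1 (htcov' hx)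
      exact ⟨g y, Set.mem_image_of_mem g hy⟩
    set K : NonemptyCompacts X := ⟨⟨E', hE'fin.isCompact⟩, hE'ne⟩ with hK
    have hdist : dist K E < ε := by
      rw [NonemptyCompacts.dist_eq]
      have h1 : ∀ x ∈ (K : Set X), ∃ y ∈ (E : Set X), dist x y ≤ 2 * (ε / 3) := by
        rintro x ⟨y, hy, rfl⟩
        obtain ⟨z, hz1, hz2⟩ := hy.2
        refine ⟨z, hz2, ?_⟩
        calc dist (g y) z ≤ dist (g y) y + dist y z := dist_triangle _ _ _
          _ ≤ ε / 3 + ε / 3 := by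
              have := hg2 y
              have hz1' : dist z y < ε / 3 := Metric.mem_ball.1 hz1
              rw [dist_comm y z]
              linarith
          _ = 2 * (ε / 3) := by ring
      have h2 : ∀ x ∈ (E : Set X), ∃ y ∈ (K : Set X), dist x y ≤ 2 * (ε / 3) := by
        intro x hx
        obtain ⟨y, hy, hxy⟩ := Set.mem_iUnion₂.1 (htcov' hx)
        refine ⟨g y, Set.mem_image_of_mem g hy, ?_⟩
        calc dist x (g y) ≤ dist x y + dist y (g y) := dist_triangle _ _ _
          _ ≤ ε / 3 + ε / 3 := by
              have := hg2 y
              have := Metric.mem_ball.1 hxy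
              rw [dist_comm y (g y)]
              linarith
          _ = 2 * (ε / 3) := by ring
      calc Metric.hausdorffDist (K : Set X) (E : Set X) ≤ 2 * (ε / 3) :=
            Metric.hausdorffDist_le_of_mem_dist (by linarith) h1 h2
        _ < ε := by linarith
    have hKT : K ∈ T := hball hdist
    obtain ⟨x, hxK, hxF⟩ := hKT
    obtain ⟨y, _, rfl⟩ := hxK
    exact hg1 y hxF
  exact (hclosed.isNowhereDense_iff).2 hint

theorem stmt11 :
    IsMeagre {E : TopologicalSpace.NonemptyCompacts (Set.Icc (0 : ℝ) 1) |
      ∃ x : Set.Icc (0 : ℝ) 1, x ∈ E ∧ ¬ Liouville (x : ℝ) ∧ Irrational (x : ℝ)} := by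
  -- {Liouville} is a dense Gδ in ℝ
  obtain ⟨U, hUopen, hUeq⟩ := IsGδ.setOf_liouville.eq_iInter_nat
  have hUdense : ∀ n, Dense (U n) := fun n ↦
    dense_liouville.mono (by rw [hUeq]; exact Set.iInter_subset U n)
  -- pull back to the subtype
  set F : ℕ → Set (Set.Icc (0 : ℝ) 1) := fun n ↦ Subtype.val ⁻¹' (U n)ᶜ with hF
  have hFclosed : ∀ n, IsClosed (F n) :=
    fun n ↦ (hUopen n).isClosed_compl.preimage continuous_subtype_val
  have hFcompl : ∀ n, Dense (F n)ᶜ := by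
    intro n
    rw [Metric.dense_iff]
    rintro ⟨x, hx0, hx1⟩ ε hε
    -- find a point of U n in [0,1] near x
    set a : ℝ := max (x - ε / 2) 0 with ha
    set b : ℝ := min (x + ε / 2) 1 with hb
    have hab : a < b := by
      exact max_lt (lt_min_iff.2 ⟨by linarith, by linarith⟩)
        (lt_min_iff.2 ⟨by linarith, by linarith⟩)
    obtain ⟨y, hyU, hy⟩ := (hUdense n).exists_mem_open isOpen_Ioo
      (Set.nonempty_Ioo.2 hab)
    have hy0 : 0 ≤ y := le_trans (le_max_right _ _) hy.1.le
    have hy1 : y ≤ 1 := le_trans hy.2.le (min_le_right _ _)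
    refine ⟨⟨y, hy0, hy1⟩, Metric.mem_ball.2 ?_, ?_⟩
    · rw [Subtype.dist_eq]
      have h1 : x - ε / 2 ≤ a := le_max_left _ _
      have h2 : b ≤ x + ε / 2 := min_le_left _ _
      rw [Real.dist_eq, abs_lt]
      constructor <;> simp only at * <;> [linarith [hy.1]; linarith [hy.2]]
    · simp only [Set.mem_compl_iff, hF, Set.mem_preimage, not_not]
      exact hyU
  -- conclude
  have hsub : {E : TopologicalSpace.NonemptyCompacts (Set.Icc (0 : ℝ) 1) |
      ∃ x : Set.Icc (0 : ℝ) 1, x ∈ E ∧ ¬ Liouville (x : ℝ) ∧ Irrational (x : ℝ)} ⊆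
      ⋃ n, {E : TopologicalSpace.NonemptyCompacts (Set.Icc (0 : ℝ) 1) |
        ((E : Set (Set.Icc (0 : ℝ) 1)) ∩ F n).Nonempty} := by
    rintro E ⟨x, hxE, hxL, _⟩
    have : (x : ℝ) ∉ ⋂ n, U n := by rw [← hUeq]; exact hxL
    obtain ⟨n, hn⟩ := by
      simpa only [Set.mem_iInter, not_forall] using this
    exact Set.mem_iUnion.2 ⟨n, ⟨x, hxE, hn⟩⟩
  refine (isMeagre_iUnion fun n ↦ ?_).mono hsub
  rw [isMeagre_iff_countable_union_isNowhereDense]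
  refine ⟨{{E : TopologicalSpace.NonemptyCompacts (Set.Icc (0 : ℝ) 1) |
      ((E : Set (Set.Icc (0 : ℝ) 1)) ∩ F n).Nonempty}}, ?_, Set.countable_singleton _, ?_⟩
  · rintro t rfl
    exact aux_nowhereDense (hFclosed n) (hFcompl n)
  · rw [Set.sUnion_singleton]
end

section
/- Let A ⊆ [0,1] be a compact set such that for every k ∈ ℕ there exist n ≥ k and a finite set γ ⊆ {j/2^n : 0 ≤ j ≤ 2^n} with Hausdorff distance d_H(A, γ) < 2^{−n²}. Then for every m ∈ ℕ, the Cartesian power A^m ⊆ ℝ^m has Hausdorff dimension zero. -/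
/-!
Every coordinate of a point of `A^m` lies within `2^{-n²}` of the grid approximation `γ`, so
`A^m` is covered by `#γ^m ≤ (2^n + 1)^m` sup-metric balls of diameter `2^{1-n²}`. For `d > 0`
the bound `(2^n + 1)^m 2^{d(1-n²)}` on the sums `∑ diam^d` over these covers tends to `0` along
the good scales `n → ∞`, so `μH[d] (A^m) = 0`.
-/

open MeasureTheory Set Filter Topology Metric
open scoped ENNReal

theorem hausdorffMeasure_eq_zero_of_finite_covers {X : Type*} [EMetricSpace X]
    [MeasurableSpace X] [BorelSpace X] {ι : ℕ → Type*} [∀ k, Fintype (ι k)] {S : Set X}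
    (t : ∀ k, ι k → Set X) (r : ℕ → ℝ≥0∞) (hr : Tendsto r atTop (𝓝 0))
    (hcov : ∀ k, S ⊆ ⋃ i, t k i) (hdiam : ∀ k i, ediam (t k i) ≤ r k) {d : ℝ} (hd : 0 ≤ d)
    (hsmall : Tendsto (fun k => (Fintype.card (ι k) : ℝ≥0∞) * r k ^ d) atTop (𝓝 0)) :
    μH[d] S = 0 := by
  have hsum (k : ℕ) : ∑ i, ediam (t k i) ^ d ≤ Fintype.card (ι k) * r k ^ d := by
    calc ∑ i, ediam (t k i) ^ d ≤ ∑ _i : ι k, r k ^ d :=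
          Finset.sum_le_sum fun i _ => ENNReal.rpow_le_rpow (hdiam k i) hd
      _ = Fintype.card (ι k) * r k ^ d := by simp
  refine le_zero_iff.1 ?_
  calc μH[d] S ≤ liminf (fun k => ∑ i, ediam (t k i) ^ d) atTop :=
        Measure.hausdorffMeasure_le_liminf_sum d S r hr t (.of_forall hdiam) (.of_forall hcov)
    _ ≤ liminf (fun k => (Fintype.card (ι k) : ℝ≥0∞) * r k ^ d) atTop :=
        liminf_le_liminf (.of_forall hsum)
    _ = 0 := hsmall.liminf_eq

theorem dimH_eq_zero_of_finite_covers {X : Type*} [EMetricSpace X]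
    {ι : ℕ → Type*} [∀ k, Fintype (ι k)] {S : Set X}
    (t : ∀ k, ι k → Set X) (r : ℕ → ℝ≥0∞) (hr : Tendsto r atTop (𝓝 0))
    (hcov : ∀ k, S ⊆ ⋃ i, t k i) (hdiam : ∀ k i, ediam (t k i) ≤ r k)
    (hsmall : ∀ d : ℝ, 0 < d →
      Tendsto (fun k => (Fintype.card (ι k) : ℝ≥0∞) * r k ^ d) atTop (𝓝 0)) :
    dimH S = 0 := by
  borelize X
  refine le_antisymm (dimH_le fun d hd => ?_) zero_le
  by_contra! hpos
  have hd0 : (0 : ℝ) < d := by exact_mod_cast hpos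
  rw [hausdorffMeasure_eq_zero_of_finite_covers t r hr hcov hdiam hd0.le (hsmall d hd0)] at hd
  exact ENNReal.zero_ne_top hd

theorem pi_subset_iUnion_pi_closedEBall {α ι : Type*} [PseudoEMetricSpace α] {A γ : Set α}
    {r : ℝ≥0∞} (h : ∀ x ∈ A, ∃ y ∈ γ, edist x y ≤ r) :
    univ.pi (fun _ : ι => A) ⊆ ⋃ f : ι → γ, univ.pi fun i => closedEBall (f i : α) r := by
  intro x hx
  choose y hyγ hyx using fun i => h (x i) (hx i trivial)
  exact mem_iUnion.2 ⟨fun i => ⟨y i, hyγ i⟩, fun i _ => hyx i⟩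

theorem dimH_pi_eq_zero_of_hausdorffEDist_lt {α ι : Type*} [EMetricSpace α] [Fintype ι]
    {A : Set α} (γ : ℕ → Finset α) (r : ℕ → ℝ≥0∞) (hγ : ∀ k, hausdorffEDist A (γ k) < r k)
    (hr : Tendsto r atTop (𝓝 0))
    (hsmall : ∀ d : ℝ, 0 < d →
      Tendsto (fun k => ((γ k).card : ℝ≥0∞) ^ Fintype.card ι * r k ^ d) atTop (𝓝 0)) :
    dimH (univ.pi fun _ : ι => A) = 0 := by
  classical
  have hcov (k : ℕ) := pi_subset_iUnion_pi_closedEBall (ι := ι) fun x hx =>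
    (exists_edist_lt_of_hausdorffEDist_lt hx (hγ k)).imp fun _ ⟨hy, hxy⟩ => ⟨hy, hxy.le⟩
  refine dimH_eq_zero_of_finite_covers _ (fun k => 2 * r k)
    (by simpa using ENNReal.Tendsto.const_mul hr (.inr ENNReal.ofNat_ne_top)) hcov
    (fun k f => ediam_pi_le_of_le fun i => ediam_closedEBall_le) fun d hd => ?_
  have h2d : (2 : ℝ≥0∞) ^ d ≠ ⊤ := ENNReal.rpow_ne_top_of_nonneg hd.le ENNReal.ofNat_ne_top
  simpa [Fintype.card_fun, ENNReal.mul_rpow_of_nonneg _ _ hd.le, mul_left_comm] using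
    ENNReal.Tendsto.const_mul (hsmall d hd) (.inr h2d)

theorem hausdorffEDist_lt_ofReal_of_hausdorffDist_lt {α : Type*} [PseudoMetricSpace α]
    {s t : Set α} {r : ℝ} (hs : s.Nonempty) (ht : t.Nonempty) (bs : Bornology.IsBounded s)
    (bt : Bornology.IsBounded t) (h : hausdorffDist s t < r) :
    hausdorffEDist s t < ENNReal.ofReal r :=
  (ENNReal.lt_ofReal_iff_toReal_lt (hausdorffEDist_ne_top_of_nonempty_of_bounded hs ht bs bt)).2 h

theorem card_le_add_one_of_subset_image_Iic {α : Type*} {γ : Finset α} {f : ℕ → α} {N : ℕ}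
    (h : (γ : Set α) ⊆ {x | ∃ j : ℕ, j ≤ N ∧ x = f j}) : γ.card ≤ N + 1 := by
  classical
  have hsub : γ ⊆ (Finset.range (N + 1)).image f := by
    intro x hx
    obtain ⟨j, hj, rfl⟩ := h hx
    exact Finset.mem_image_of_mem f (Finset.mem_range_succ_iff.2 hj)
  exact (Finset.card_le_card hsub).trans (Finset.card_image_le.trans_eq (Finset.card_range _))

theorem tendsto_two_pow_add_one_pow_mul_inv_two_pow_sq (m : ℕ) {d : ℝ} (hd : 0 < d) :
    Tendsto (fun n : ℕ => ((2 : ℝ≥0∞) ^ n + 1) ^ m * ((2 : ℝ≥0∞) ^ (n ^ 2))⁻¹ ^ d)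
      atTop (𝓝 0) := by
  have hle (n : ℕ) : ((2 : ℝ≥0∞) ^ n + 1) ^ m * ((2 : ℝ≥0∞) ^ (n ^ 2))⁻¹ ^ d ≤
      (2 : ℝ≥0∞) ^ ((((n + 1) * m : ℕ) : ℝ) - d * (n ^ 2 : ℕ)) := by
    have hnat : 2 ^ n + 1 ≤ 2 ^ (n + 1) := by
      have := Nat.one_le_two_pow (n := n); rw [pow_succ]; omega
    have hcast : ((2 : ℝ≥0∞) ^ n + 1) ^ m ≤ 2 ^ ((n + 1) * m) := by
      rw [pow_mul]; gcongr; exact_mod_cast hnat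
    have hinv : ((2 : ℝ≥0∞) ^ (n ^ 2))⁻¹ ^ d = 2 ^ (-(d * (n ^ 2 : ℕ))) := by
      rw [← ENNReal.rpow_natCast, ENNReal.inv_rpow, ← ENNReal.rpow_mul, ← ENNReal.rpow_neg,
        mul_comm]
    rw [hinv, sub_eq_add_neg, ENNReal.rpow_add _ _ two_ne_zero ENNReal.ofNat_ne_top,
      ENNReal.rpow_natCast]
    gcongr
  have hexp : Tendsto (fun n : ℕ => (((n + 1) * m : ℕ) : ℝ) - d * (n ^ 2 : ℕ)) atTop atBot := by
    have hlin : Tendsto (fun n : ℕ => d * n - m) atTop atTop :=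
      tendsto_atTop_add_const_right _ _ (tendsto_natCast_atTop_atTop.const_mul_atTop hd)
    refine (tendsto_atBot_add_const_left _ (m : ℝ) (tendsto_neg_atTop_atBot.comp
      (tendsto_natCast_atTop_atTop.atTop_mul_atTop₀ hlin))).congr fun n => ?_
    simp only [Function.comp_apply]
    push_cast
    ring
  exact tendsto_of_tendsto_of_tendsto_of_le_of_le tendsto_const_nhds
    ((ENNReal.tendsto_rpow_atBot_of_one_lt_base ENNReal.one_lt_two).comp hexp)
    (fun _ => zero_le) hle

theorem stmt12_general (A : Set ℝ) (hc : IsCompact A) (hne : A.Nonempty)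
    (happrox : ∀ k : ℕ, ∃ n : ℕ, k ≤ n ∧ ∃ γ : Finset ℝ, γ.Nonempty ∧
      (↑γ : Set ℝ) ⊆ {x : ℝ | ∃ j : ℕ, j ≤ 2 ^ n ∧ x = (j : ℝ) / 2 ^ n} ∧
      Metric.hausdorffDist A ↑γ < ((2 : ℝ) ^ (n ^ 2))⁻¹) :
    ∀ m : ℕ, dimH (Set.univ.pi fun _ : Fin m => A) = 0 := by
  intro m
  choose n hkn γ hγne hγgrid hγdist using happrox
  have hn : Tendsto n atTop atTop := tendsto_atTop_mono hkn tendsto_id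
  have hr : Tendsto (fun k => ((2 : ℝ≥0∞) ^ (n k ^ 2))⁻¹) atTop (𝓝 0) := by
    simpa [Function.comp_def] using
      (tendsto_two_pow_add_one_pow_mul_inv_two_pow_sq 0 one_pos).comp hn
  refine dimH_pi_eq_zero_of_hausdorffEDist_lt γ _ (fun k => ?_) hr fun d hd => ?_
  · simpa [ENNReal.ofReal_inv_of_pos, ENNReal.ofReal_pow] using
      hausdorffEDist_lt_ofReal_of_hausdorffDist_lt hne (hγne k) hc.isBounded
        (γ k).finite_toSet.isBounded (hγdist k)
  · refine tendsto_of_tendsto_of_tendsto_of_le_of_le tendsto_const_nhds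
      ((tendsto_two_pow_add_one_pow_mul_inv_two_pow_sq m hd).comp hn) (fun _ => zero_le)
      fun k => ?_
    simp only [Fintype.card_fin, Function.comp_apply]
    gcongr
    exact_mod_cast card_le_add_one_of_subset_image_Iic (hγgrid k)

theorem stmt12 (A : Set ℝ) (hc : IsCompact A) (hsub : A ⊆ Set.Icc 0 1) (hne : A.Nonempty)
    (happrox : ∀ k : ℕ, ∃ n : ℕ, k ≤ n ∧ ∃ γ : Finset ℝ, γ.Nonempty ∧
      (↑γ : Set ℝ) ⊆ {x : ℝ | ∃ j : ℕ, j ≤ 2 ^ n ∧ x = (j : ℝ) / 2 ^ n} ∧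
      Metric.hausdorffDist A ↑γ < ((2 : ℝ) ^ (n ^ 2))⁻¹) :
    ∀ m : ℕ, dimH (Set.univ.pi fun _ : Fin m => A) = 0 :=
  stmt12_general A hc hne happrox
end

section
/- For a typical compact set A ∈ K([0,1]), the m-fold sumset S^m(A) = {x₁ + ⋯ + x_m : x_i ∈ A} has Hausdorff dimension zero for every m ∈ ℕ. -/
/-!
If the `m`-fold sumset of `A` is covered by `N` balls of radius `r` with `N (2r)^ε < 1`, then so
is the sumset of every compact set Hausdorff-close to `A` (enlarge `r` slightly), and finite sets,
whose sumsets are finite, admit such covers at every scale. So for fixed `m`, `ε` and maximal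
radius `δ` the sets admitting such a cover form a dense open subset of `K([0,1])`. A set lying in
all of these countably many dense open sets has `μH[ε] (S^m A) ≤ 1` for arbitrarily small
`ε > 0`, hence `dimH (S^m A) = 0`.
-/

open MeasureTheory Metric Set TopologicalSpace Filter Topology Finset

/-- A witness that the `ε`-dimensional Hausdorff content of `S` at scale `2δ` is less than `1`. -/
def HasSmallBallCover {X : Type*} [PseudoMetricSpace X] (ε δ : ℝ) (S : Set X) : Prop :=
  ∃ (t : Finset X) (r : ℝ), 0 < r ∧ r < δ ∧ S ⊆ ⋃ c ∈ t, ball c r ∧ (#t : ℝ) * (2 * r) ^ ε < 1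

lemma exists_radius_gt_mul_rpow_lt_one {N : ℕ} {ε r₀ δ : ℝ} (hε : 0 ≤ ε) (hδ : r₀ < δ)
    (h : (N : ℝ) * (2 * r₀) ^ ε < 1) :
    ∃ r, r₀ < r ∧ r < δ ∧ (N : ℝ) * (2 * r) ^ ε < 1 := by
  have hf : ContinuousAt (fun r : ℝ => (N : ℝ) * (2 * r) ^ ε) r₀ :=
    continuousAt_const.mul ((continuousAt_const.mul continuousAt_id).rpow_const (Or.inr hε))
  have hev : ∀ᶠ r in 𝓝 r₀, (N : ℝ) * (2 * r) ^ ε < 1 ∧ r < δ :=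
    (hf.eventually (gt_mem_nhds h)).and (gt_mem_nhds hδ)
  obtain ⟨r, ⟨hN, hrδ⟩, hr₀r⟩ :=
    ((hev.filter_mono nhdsWithin_le_nhds).and (self_mem_nhdsWithin (s := Ioi r₀))).exists
  exact ⟨r, hr₀r, hrδ, hN⟩

section PseudoMetric

variable {X : Type*} [PseudoMetricSpace X] {ε δ : ℝ} {S : Set X}

lemma Set.Finite.hasSmallBallCover (hS : S.Finite) (hε : 0 < ε) (hδ : 0 < δ) :
    HasSmallBallCover ε δ S := by
  obtain ⟨r, hr, hrδ, hN⟩ := exists_radius_gt_mul_rpow_lt_one (N := #hS.toFinset) hε.le hδ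
    (by simp [Real.zero_rpow hε.ne'])
  exact ⟨hS.toFinset, r, hr, hrδ,
    fun s hs => mem_iUnion₂.2 ⟨s, hS.mem_toFinset.2 hs, mem_ball_self hr⟩, hN⟩

lemma HasSmallBallCover.exists_thickening (h : HasSmallBallCover ε δ S) (hε : 0 ≤ ε) :
    ∃ η > 0, ∀ T ⊆ thickening η S, HasSmallBallCover ε δ T := by
  obtain ⟨t, r, hr, hrδ, hS, hN⟩ := h
  obtain ⟨r', hrr', hr'δ, hN'⟩ := exists_radius_gt_mul_rpow_lt_one hε hrδ hN
  refine ⟨r' - r, sub_pos.2 hrr', fun T hT => ⟨t, r', hr.trans hrr', hr'δ, fun z hz => ?_, hN'⟩⟩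
  obtain ⟨s, hs, hzs⟩ := mem_thickening_iff.1 (hT hz)
  obtain ⟨c, hc, hsc⟩ := mem_iUnion₂.1 (hS hs)
  refine mem_iUnion₂.2 ⟨c, hc, ?_⟩
  rw [mem_ball] at hsc ⊢
  linarith [dist_triangle z s c]

end PseudoMetric

lemma hausdorffMeasure_le_one_of_hasSmallBallCover {X : Type*} [MetricSpace X]
    [MeasurableSpace X] [BorelSpace X] {S : Set X} {ε : ℝ} (hε : 0 ≤ ε) {δ : ℕ → ℝ}
    (hδ : Tendsto δ atTop (𝓝 0)) (h : ∀ n, HasSmallBallCover ε (δ n) S) : μH[ε] S ≤ 1 := by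
  choose t r hr hrδ hS hN using h
  have hdiam : ∀ n (c : X), ediam (ball c (r n)) ≤ ENNReal.ofReal (2 * r n) := fun n c => by
    rw [← eball_ofReal, ENNReal.ofReal_mul zero_le_two, ENNReal.ofReal_ofNat]
    exact ediam_eball_le
  have hsum : ∀ n, ∑ c : t n, ediam (ball (c : X) (r n)) ^ ε ≤ 1 := fun n => calc
    ∑ c : t n, ediam (ball (c : X) (r n)) ^ ε
      ≤ ∑ _c : t n, ENNReal.ofReal ((2 * r n) ^ ε) := Finset.sum_le_sum fun c _ => by
        rw [← ENNReal.ofReal_rpow_of_nonneg (by linarith [hr n]) hε]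
        exact ENNReal.rpow_le_rpow (hdiam n c) hε
    _ = ENNReal.ofReal (#(t n) * (2 * r n) ^ ε) := by
        rw [Finset.sum_const, Finset.card_univ, Fintype.card_coe, nsmul_eq_mul,
          ENNReal.ofReal_mul (Nat.cast_nonneg _), ENNReal.ofReal_natCast]
    _ ≤ 1 := ENNReal.ofReal_le_one.2 (hN n).le
  have hδ' : Tendsto (fun n => ENNReal.ofReal (2 * δ n)) atTop (𝓝 0) := by
    simpa using ENNReal.tendsto_ofReal (hδ.const_mul 2)
  calc μH[ε] S ≤ liminf (fun n => ∑ c : t n, ediam (ball (c : X) (r n)) ^ ε) atTop :=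
        Measure.hausdorffMeasure_le_liminf_sum ε S _ hδ' (fun n (c : t n) => ball (c : X) (r n))
          (Eventually.of_forall fun n c => (hdiam n c).trans
            (ENNReal.ofReal_le_ofReal (by linarith [hrδ n])))
          (Eventually.of_forall fun n => by simpa only [iUnion_subtype] using hS n)
    _ ≤ 1 := liminf_le_of_frequently_le' (Frequently.of_forall hsum)

lemma dimH_eq_zero_of_hasSmallBallCover {X : Type*} [MetricSpace X] {S : Set X}
    {ε δ : ℕ → ℝ} (hε0 : ∀ k, 0 ≤ ε k) (hε : Tendsto ε atTop (𝓝 0))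
    (hδ : Tendsto δ atTop (𝓝 0)) (h : ∀ k n, HasSmallBallCover (ε k) (δ n) S) : dimH S = 0 := by
  borelize X
  have hle : ∀ k, dimH S ≤ ENNReal.ofReal (ε k) := fun k => by
    refine dimH_le_of_hausdorffMeasure_ne_top (d := (ε k).toNNReal) ?_
    rw [Real.coe_toNNReal _ (hε0 k)]
    exact ne_top_of_le_ne_top ENNReal.one_ne_top
      (hausdorffMeasure_le_one_of_hasSmallBallCover (hε0 k) hδ (h k))
  exact le_antisymm (ge_of_tendsto (by simpa using ENNReal.tendsto_ofReal hε)
    (Eventually.of_forall hle)) zero_le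

section Sumset

variable {E : Type*} [NormedAddCommGroup E] {I : Set E}

def sumset (m : ℕ) (A : Set I) : Set E :=
  {s | ∃ x : Fin m → I, (∀ i, x i ∈ A) ∧ s = ∑ i, (x i : E)}

lemma Set.Finite.sumset {A : Set I} (hA : A.Finite) (m : ℕ) : (sumset m A).Finite :=
  ((Set.Finite.pi fun _ : Fin m => hA).image fun x => ∑ i, (x i : E)).subset
    fun _ ⟨x, hx, hs⟩ => ⟨x, fun i _ => hx i, hs.symm⟩

lemma sumset_subset_cthickening {A B : Set I} {d : ℝ} (h : ∀ b ∈ B, ∃ a ∈ A, dist b a ≤ d)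
    (m : ℕ) : sumset m B ⊆ cthickening (m * d) (sumset m A) := by
  rintro _ ⟨x, hx, rfl⟩
  choose y hy hxy using fun i => h (x i) (hx i)
  refine mem_cthickening_of_dist_le _ _ _ _ ⟨y, hy, rfl⟩ ?_
  calc dist (∑ i, (x i : E)) (∑ i, (y i : E)) ≤ ∑ i, dist (x i : E) (y i) := dist_sum_sum_le _ _ _
    _ ≤ ∑ _i : Fin m, d := Finset.sum_le_sum fun i _ => hxy i
    _ = m * d := by simp

lemma isOpen_setOf_hasSmallBallCover_sumset {ε δ : ℝ} (hε : 0 ≤ ε) (m : ℕ) :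
    IsOpen {A : NonemptyCompacts I | HasSmallBallCover ε δ (sumset m (A : Set I))} := by
  rw [Metric.isOpen_iff]
  intro A hA
  obtain ⟨η, hη, hT⟩ := hA.exists_thickening hε
  have hm : (m : ℝ) * (η / (m + 1)) < η := by
    rw [mul_div_assoc', div_lt_iff₀ (by positivity)]
    linarith
  refine ⟨η / (m + 1), by positivity, fun B hB => hT _ ?_⟩
  refine (sumset_subset_cthickening (fun b hb => ?_) m).trans
    (cthickening_subset_thickening' hη hm _)
  obtain ⟨a, ha, hab⟩ := exists_dist_lt_of_hausdorffDist_lt hb (mem_ball.1 hB)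
    (hausdorffEDist_ne_top_of_nonempty_of_bounded B.nonempty A.nonempty
      B.isCompact.isBounded A.isCompact.isBounded)
  exact ⟨a, ha, hab.le⟩

lemma dense_setOf_hasSmallBallCover_sumset {ε δ : ℝ} (hε : 0 < ε) (hδ : 0 < δ) (m : ℕ) :
    Dense {A : NonemptyCompacts I | HasSmallBallCover ε δ (sumset m (A : Set I))} :=
  NonemptyCompacts.dense_setOfPred_finite.mono fun _ hA => (hA.sumset m).hasSmallBallCover hε hδ

end Sumset

theorem stmt13 :
    IsMeagre {A : TopologicalSpace.NonemptyCompacts (Set.Icc (0 : ℝ) 1) |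
      ¬ ∀ m : ℕ, dimH {s : ℝ | ∃ x : Fin m → Set.Icc (0 : ℝ) 1,
          (∀ i, x i ∈ A) ∧ s = ∑ i, (x i : ℝ)} = 0} := by
  have hres (m k n : ℕ) : {A : NonemptyCompacts (Icc (0 : ℝ) 1) |
      HasSmallBallCover (1 / (k + 1 : ℝ)) (1 / (n + 1 : ℝ)) (sumset m (A : Set (Icc (0 : ℝ) 1)))}
        ∈ residual _ :=
    residual_of_dense_open (isOpen_setOf_hasSmallBallCover_sumset (by positivity) m)
      (dense_setOf_hasSmallBallCover_sumset (by positivity) (by positivity) m)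
  refine mem_of_superset (countable_iInter_mem.2 fun m => countable_iInter_mem.2 fun k =>
    countable_iInter_mem.2 fun n => hres m k n) fun A hA => ?_
  simp only [mem_iInter, mem_ofPred_eq] at hA
  simp only [mem_compl_iff, mem_ofPred_eq, not_not]
  exact fun m => dimH_eq_zero_of_hasSmallBallCover (fun k => by positivity)
    tendsto_one_div_add_atTop_nhds_zero_nat tendsto_one_div_add_atTop_nhds_zero_nat (hA m)
end

section
/- For a typical compact set A ∈ K([0,1]), the Cartesian power A^m has Hausdorff dimension zero for every m ∈ ℕ. -/
/-!
Call `A` cheap (for `m`, `s`, `ε`) when it is covered by `n` balls of radius `δ` with `2δ ≤ ε`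
and `n ^ m (2δ) ^ s < ε`. Among nonempty compacta this is an open condition (it asks `K` to lie in
a fixed open set) and it holds for every finite set (take tiny balls around its points), so a
typical compact set is cheap for all `m`, `s = 1/(k+1)` and `ε = 1/(j+1)`. For such `A`, the
`n ^ m` products of the balls cover `A ^ m` in the sup metric with `s`-dimensional cost below `ε`,
so `μH[s] (A ^ m) = 0` for every `s > 0`.
-/

open MeasureTheory Metric Set Filter Topology TopologicalSpace NNReal ENNReal

variable {X : Type*}

section PseudoMetric

variable [PseudoMetricSpace X]

def HasCheapBallCover (m : ℕ) (s ε : ℝ) (A : Set X) : Prop :=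
  ∃ (n : ℕ) (c : Fin n → X) (δ : ℝ), 0 < δ ∧ 2 * δ ≤ ε ∧ (n : ℝ) ^ m * (2 * δ) ^ s < ε ∧
    A ⊆ ⋃ i, ball (c i) δ

theorem isOpen_setOf_hasCheapBallCover (m : ℕ) (s ε : ℝ) :
    IsOpen {K : NonemptyCompacts X | HasCheapBallCover m s ε (K : Set X)} := by
  rw [isOpen_iff_forall_mem_open]
  rintro K ⟨n, c, δ, hδ, hδε, hcost, hK⟩
  exact ⟨{L : NonemptyCompacts X | (L : Set X) ⊆ ⋃ i, ball (c i) δ},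
    fun L hL => ⟨n, c, δ, hδ, hδε, hcost, hL⟩,
    NonemptyCompacts.isOpen_subsets_of_isOpen (isOpen_iUnion fun _ => isOpen_ball), hK⟩

theorem Set.Finite.hasCheapBallCover {A : Set X} (hA : A.Finite) (m : ℕ) {s ε : ℝ}
    (hs : 0 < s) (hε : 0 < ε) : HasCheapBallCover m s ε A := by
  obtain ⟨n, c, -, rfl⟩ := hA.fin_param
  have hcost : Tendsto (fun δ : ℝ => (n : ℝ) ^ m * (2 * δ) ^ s) (𝓝[>] 0) (𝓝 0) := by
    have : ContinuousAt (fun δ : ℝ => (n : ℝ) ^ m * (2 * δ) ^ s) 0 :=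
      continuousAt_const.mul ((Real.continuousAt_rpow_const _ _ (.inr hs.le)).comp
        (continuousAt_const.mul continuousAt_id))
    simpa [Real.zero_rpow hs.ne'] using this.tendsto.mono_left nhdsWithin_le_nhds
  have hdiam : Tendsto (fun δ : ℝ => 2 * δ) (𝓝[>] 0) (𝓝 0) := by
    simpa using ((continuous_const_mul (2 : ℝ)).tendsto 0).mono_left nhdsWithin_le_nhds
  obtain ⟨δ, hcostδ, hdiamδ, hδ⟩ := ((hcost.eventually (gt_mem_nhds hε)).and
    ((hdiam.eventually (ge_mem_nhds hε)).and self_mem_nhdsWithin)).exists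
  exact ⟨n, c, δ, hδ, hdiamδ, hcostδ, range_subset_iff.2 fun i =>
    mem_iUnion_of_mem i (mem_ball_self hδ)⟩

theorem eventually_residual_hasCheapBallCover (m : ℕ) {s ε : ℝ} (hs : 0 < s) (hε : 0 < ε) :
    ∀ᶠ K : NonemptyCompacts X in residual _, HasCheapBallCover m s ε (K : Set X) :=
  residual_of_dense_open (isOpen_setOf_hasCheapBallCover m s ε)
    (NonemptyCompacts.dense_setOfPred_finite.mono fun _ hK => hK.hasCheapBallCover m hs hε)

theorem ediam_ball_le_ofReal (x : X) (δ : ℝ) : ediam (ball x δ) ≤ ENNReal.ofReal (2 * δ) :=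
  ediam_le_of_forall_dist_le fun y hy z hz =>
    (dist_triangle_right y z x).trans (by linarith [mem_ball.1 hy, mem_ball.1 hz])

theorem univ_pi_subset_iUnion_ball {ι κ : Type*} [Fintype ι] {A : Set X} {c : κ → X} {δ : ℝ}
    (hδ : 0 < δ) (hA : A ⊆ ⋃ i, ball (c i) δ) :
    univ.pi (fun _ : ι => A) ⊆ ⋃ f : ι → κ, ball (fun i => c (f i)) δ := by
  intro x hx
  have hnear : ∀ i, ∃ k, dist (x i) (c k) < δ := fun i =>
    (mem_iUnion.1 (hA (hx i (mem_univ i)))).imp fun _ => mem_ball.1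
  choose f hf using hnear
  exact mem_iUnion.2 ⟨f, mem_ball.2 ((dist_pi_lt_iff hδ).2 hf)⟩

end PseudoMetric

section Metric

variable [MetricSpace X] {ι : Type*} [Fintype ι] [DecidableEq ι]

theorem sum_ediam_ball_rpow_le {n : ℕ} (c : Fin n → X) {δ s : ℝ} (hδ : 0 < δ) (hs : 0 ≤ s) :
    ∑ f : ι → Fin n, ediam (ball (fun i => c (f i)) δ) ^ s ≤
      ENNReal.ofReal ((n : ℝ) ^ Fintype.card ι * (2 * δ) ^ s) := calc
  _ ≤ ∑ _f : ι → Fin n, ENNReal.ofReal (2 * δ) ^ s :=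
      Finset.sum_le_sum fun f _ => ENNReal.rpow_le_rpow (ediam_ball_le_ofReal _ δ) hs
  _ = ENNReal.ofReal ((n : ℝ) ^ Fintype.card ι * (2 * δ) ^ s) := by
      rw [Finset.sum_const, Finset.card_univ, Fintype.card_fun, Fintype.card_fin, nsmul_eq_mul,
        ENNReal.ofReal_rpow_of_pos (by positivity), ← ENNReal.ofReal_natCast,
        ← ENNReal.ofReal_mul (Nat.cast_nonneg _), Nat.cast_pow]

theorem hausdorffMeasure_univ_pi_eq_zero [MeasurableSpace (ι → X)] [BorelSpace (ι → X)]
    {A : Set X} {s : ℝ} (hs : 0 ≤ s)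
    (hA : ∀ j : ℕ, HasCheapBallCover (Fintype.card ι) s ((j : ℝ) + 1)⁻¹ A) :
    μH[s] (univ.pi fun _ : ι => A) = 0 := by
  choose n c δ hδ hδε hcost hcover using hA
  have hε : Tendsto (fun j : ℕ => ENNReal.ofReal ((j : ℝ) + 1)⁻¹) atTop (𝓝 0) := by
    simpa using ENNReal.tendsto_ofReal (tendsto_one_div_add_atTop_nhds_zero_nat (𝕜 := ℝ))
  have hdiam : ∀ j (f : ι → Fin (n j)),
      ediam (ball (fun i => c j (f i)) (δ j)) ≤ ENNReal.ofReal ((j : ℝ) + 1)⁻¹ := fun j _ =>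
    (ediam_ball_le_ofReal _ _).trans (ENNReal.ofReal_le_ofReal (hδε j))
  have hsum : ∀ j, ∑ f : ι → Fin (n j), ediam (ball (fun i => c j (f i)) (δ j)) ^ s ≤
      ENNReal.ofReal ((j : ℝ) + 1)⁻¹ := fun j =>
    (sum_ediam_ball_rpow_le (c j) (hδ j) hs).trans (ENNReal.ofReal_le_ofReal (hcost j).le)
  refine le_antisymm ?_ bot_le
  calc μH[s] (univ.pi fun _ : ι => A)
      ≤ liminf (fun j => ∑ f : ι → Fin (n j), ediam (ball (fun i => c j (f i)) (δ j)) ^ s)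
          atTop :=
        Measure.hausdorffMeasure_le_liminf_sum s _ _ hε _ (.of_forall hdiam)
          (.of_forall fun j => univ_pi_subset_iUnion_ball (hδ j) (hcover j))
    _ ≤ liminf (fun j : ℕ => ENNReal.ofReal ((j : ℝ) + 1)⁻¹) atTop :=
        liminf_le_liminf (.of_forall hsum)
    _ = 0 := hε.liminf_eq

theorem dimH_univ_pi_eq_zero {A : Set X}
    (hA : ∀ k j : ℕ, HasCheapBallCover (Fintype.card ι) ((k : ℝ) + 1)⁻¹ ((j : ℝ) + 1)⁻¹ A) :
    dimH (univ.pi fun _ : ι => A) = 0 := by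
  borelize (ι → X)
  refine le_antisymm (dimH_le fun d hd => ?_) bot_le
  rw [nonpos_iff_eq_zero, ENNReal.coe_eq_zero]
  by_contra hd0
  obtain ⟨k, hk⟩ := exists_nat_one_div_lt (NNReal.coe_pos.2 (pos_iff_ne_zero.2 hd0))
  have hle := Measure.hausdorffMeasure_mono (s := univ.pi fun _ : ι => A)
    (by simpa using hk.le : ((k : ℝ) + 1)⁻¹ ≤ d)
  rw [hausdorffMeasure_univ_pi_eq_zero (by positivity) (hA k), hd] at hle
  exact ENNReal.top_ne_zero (nonpos_iff_eq_zero.1 hle)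

end Metric

theorem stmt14 :
    IsMeagre {A : TopologicalSpace.NonemptyCompacts (Set.Icc (0 : ℝ) 1) |
      ¬ ∀ m : ℕ, dimH (Set.univ.pi fun _ : Fin m =>
          ((↑) '' { a : Set.Icc (0 : ℝ) 1 | a ∈ A } : Set ℝ)) = 0} := by
  simp only [IsMeagre, compl_ofPred, not_not]
  have hcheap : ∀ᶠ K : NonemptyCompacts (Icc (0 : ℝ) 1) in residual _, ∀ m k j : ℕ,
      HasCheapBallCover m ((k : ℝ) + 1)⁻¹ ((j : ℝ) + 1)⁻¹ (K : Set (Icc (0 : ℝ) 1)) := by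
    simp only [eventually_countable_forall]
    exact fun m k j => eventually_residual_hasCheapBallCover m (by positivity) (by positivity)
  filter_upwards [hcheap] with K hK m
  rw [← piMap_image_univ_pi, (Isometry.piMap _ fun _ => isometry_subtype_coe).dimH_image]
  exact dimH_univ_pi_eq_zero fun k j => by simpa using hK m k j
end

section
/- For a typical compact set A ∈ K([0,1]) and any real polynomial P(x) = Σ_{k=0}^n a_k x^k, the set P̃(A) = Σ_{k=0}^n a_k T^k(A) has Hausdorff dimension zero, where T^k(A) = {x₁⋯x_k : x_i ∈ A} and the sum is the sumset of the dilated sets a_k T^k(A). -/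
/-!
A typical compact set `A` has lower box-counting dimension zero: for fixed `j` and `p`, the compact
sets covered, at some scale `2⁻¹ ^ m` with `m ≥ p`, by at most `2 ^ (m / j)` balls form an open set
containing every finite set, hence an open dense one. Since the scales are shared, every power
`A ^ N` inherits this property, and a set with it has Hausdorff dimension zero because its covers
at those scales have bounded `j⁻¹`-dimensional content. Finally `P̃(A)` is the image of a power of
`A` under the Lipschitz map `x ↦ ∑ₖ aₖ ∏_{i<k} x_{k,i}`.
-/

open MeasureTheory Metric Set TopologicalSpace Filter Topology ENNReal NNReal

section DyadicCovers

variable {X : Type*} [PseudoEMetricSpace X]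

def HasDyadicCoverAt (j m : ℕ) (s : Set X) : Prop :=
  ∃ F : Finset X, F.card ^ j ≤ 2 ^ m ∧ s ⊆ ⋃ y ∈ F, eball y (2⁻¹ ^ m)

/-- The dyadic covering form of "the lower box-counting dimension of `s` is zero": for every `j`
there are arbitrarily fine scales `2⁻¹ ^ m` at which `s` is covered by at most `2 ^ (m / j)`
balls. -/
def HasLowerBoxDimZero (s : Set X) : Prop :=
  ∀ j p : ℕ, ∃ m ≥ p, HasDyadicCoverAt j m s

theorem isOpen_setOf_exists_hasDyadicCoverAt (j p : ℕ) :
    IsOpen {A : NonemptyCompacts X | ∃ m ≥ p, HasDyadicCoverAt j m (A : Set X)} := by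
  have hU : {A : NonemptyCompacts X | ∃ m ≥ p, HasDyadicCoverAt j m (A : Set X)} =
      ⋃ m ≥ p, ⋃ F ∈ {F : Finset X | F.card ^ j ≤ 2 ^ m},
        {A : NonemptyCompacts X | (A : Set X) ⊆ ⋃ y ∈ F, eball y (2⁻¹ ^ m)} := by
    ext A
    simp [HasDyadicCoverAt]
  rw [hU]
  exact isOpen_biUnion fun m _ => isOpen_biUnion fun F _ =>
    NonemptyCompacts.isOpen_subsets_of_isOpen (isOpen_biUnion fun y _ => isOpen_eball)

theorem Set.Finite.exists_hasDyadicCoverAt {s : Set X} (hs : s.Finite) (j p : ℕ) :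
    ∃ m ≥ p, HasDyadicCoverAt j m s := by
  refine ⟨max p (hs.toFinset.card ^ j), le_max_left _ _, hs.toFinset, ?_, ?_⟩
  · exact Nat.lt_two_pow_self.le.trans (Nat.pow_le_pow_right two_pos (le_max_right _ _))
  · exact fun x hx => mem_biUnion (hs.mem_toFinset.2 hx)
      (mem_eball_self (ENNReal.pow_pos (ENNReal.inv_pos.2 ofNat_ne_top) _))

theorem residual_setOf_hasLowerBoxDimZero :
    {A : NonemptyCompacts X | HasLowerBoxDimZero (A : Set X)} ∈ residual _ := by
  have hres : ∀ j p : ℕ,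
      {A : NonemptyCompacts X | ∃ m ≥ p, HasDyadicCoverAt j m (A : Set X)} ∈ residual _ :=
    fun j p => residual_of_dense_open (isOpen_setOf_exists_hasDyadicCoverAt j p)
      (NonemptyCompacts.dense_setOfPred_finite.mono fun A hA => hA.exists_hasDyadicCoverAt j p)
  exact mem_of_superset (countable_iInter_mem.2 fun j => countable_iInter_mem.2 (hres j))
    fun A hA j p => mem_iInter.1 (mem_iInter.1 hA j) p

theorem HasLowerBoxDimZero.pi {ι : Type*} [Fintype ι] {s : Set X}
    (hs : HasLowerBoxDimZero s) : HasLowerBoxDimZero (univ.pi fun _ : ι => s) := by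
  classical
  intro j p
  obtain ⟨m, hmp, F, hF, hsF⟩ := hs (Fintype.card ι * j) p
  refine ⟨m, hmp, Fintype.piFinset fun _ => F, ?_, fun x hx => ?_⟩
  · rwa [Fintype.card_piFinset, Finset.prod_const, Finset.card_univ, ← pow_mul]
  · choose y hyF hxy using fun i => mem_iUnion₂.1 (hsF (hx i trivial))
    refine mem_biUnion (Fintype.mem_piFinset.2 hyF) ?_
    rw [mem_eball, edist_pi_def,
      Finset.sup_lt_iff (ENNReal.pow_pos (ENNReal.inv_pos.2 ofNat_ne_top) _)]
    exact fun i _ => hxy i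

end DyadicCovers

/-- `c` balls of radius `2⁻¹ ^ m`, with `c ^ j ≤ 2 ^ m`, have total `j⁻¹`-dimensional
content at most `2`. -/
theorem natCast_mul_rpow_inv_le_two {c j m : ℕ} (hj : j ≠ 0) (hc : c ^ j ≤ 2 ^ m) :
    (c : ℝ≥0∞) * (2 * 2⁻¹ ^ m) ^ (j⁻¹ : ℝ) ≤ 2 := by
  rw [← ENNReal.pow_le_pow_left_iff hj, mul_pow, ENNReal.rpow_inv_natCast_pow hj]
  calc (c : ℝ≥0∞) ^ j * (2 * 2⁻¹ ^ m) ≤ 2 ^ m * (2 * 2⁻¹ ^ m) := by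
        gcongr ?_ * _; exact_mod_cast hc
    _ = 2 := by
        rw [mul_left_comm, ← mul_pow, ENNReal.mul_inv_cancel two_ne_zero ofNat_ne_top, one_pow,
          mul_one]
    _ ≤ 2 ^ j := le_self_pow₀ one_le_two hj

theorem HasLowerBoxDimZero.hausdorffMeasure_inv_natCast_le {X : Type*} [EMetricSpace X]
    [MeasurableSpace X] [BorelSpace X] {s : Set X} (hs : HasLowerBoxDimZero s) {j : ℕ}
    (hj : j ≠ 0) : μH[(j⁻¹ : ℝ)] s ≤ 2 := by
  choose m hm F hF hsF using hs j
  have hr : Tendsto (fun p : ℕ => (2 : ℝ≥0∞) * 2⁻¹ ^ p) atTop (𝓝 0) := by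
    simpa using ENNReal.Tendsto.const_mul
      (ENNReal.tendsto_pow_atTop_nhds_zero_of_lt_one (by norm_num)) (Or.inr ofNat_ne_top)
  have hdiam : ∀ p (y : F p), ediam (eball (y : X) (2⁻¹ ^ m p)) ≤ 2 * 2⁻¹ ^ m p :=
    fun _ _ => ediam_eball_le
  have hdiam_le : ∀ p (y : F p), ediam (eball (y : X) (2⁻¹ ^ m p)) ≤ 2 * 2⁻¹ ^ p :=
    fun p y => (hdiam p y).trans <| by
      gcongr 2 * ?_; exact pow_le_pow_of_le_one zero_le (by norm_num) (hm p)
  have hcover : ∀ p, s ⊆ ⋃ y : F p, eball (y : X) (2⁻¹ ^ m p) := fun p x hx => by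
    obtain ⟨y, hy, hxy⟩ := mem_iUnion₂.1 (hsF p hx)
    exact mem_iUnion.2 ⟨⟨y, hy⟩, hxy⟩
  calc μH[(j⁻¹ : ℝ)] s
      ≤ liminf (fun p => ∑ y : F p, ediam (eball (y : X) (2⁻¹ ^ m p)) ^ (j⁻¹ : ℝ)) atTop :=
        Measure.hausdorffMeasure_le_liminf_sum _ s _ hr _
          (Eventually.of_forall hdiam_le) (Eventually.of_forall hcover)
    _ ≤ 2 := liminf_le_of_frequently_le' <| Frequently.of_forall fun p =>
        calc ∑ y : F p, ediam (eball (y : X) (2⁻¹ ^ m p)) ^ (j⁻¹ : ℝ)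
            ≤ ∑ _y : F p, (2 * 2⁻¹ ^ m p) ^ (j⁻¹ : ℝ) := by gcongr with y; exact hdiam p y
          _ ≤ 2 := by
            rw [Finset.sum_const, Finset.card_univ, Fintype.card_coe, nsmul_eq_mul]
            exact natCast_mul_rpow_inv_le_two hj (hF p)

theorem HasLowerBoxDimZero.dimH_eq_zero {X : Type*} [EMetricSpace X] {s : Set X}
    (hs : HasLowerBoxDimZero s) : dimH s = 0 := by
  borelize X
  refine nonpos_iff_eq_zero.1 <| ge_of_tendsto' ENNReal.tendsto_inv_nat_nhds_zero fun j => ?_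
  rcases eq_or_ne j 0 with rfl | hj
  · simp
  · have := dimH_le_of_hausdorffMeasure_ne_top (d := (j : ℝ≥0)⁻¹) (s := s) ?_
    · simpa [ENNReal.coe_inv (Nat.cast_ne_zero.2 hj)] using this
    · refine ne_top_of_le_ne_top (ofNat_ne_top (n := 2)) ?_
      simpa using hs.hausdorffMeasure_inv_natCast_le hj

theorem norm_prod_sub_prod_le {ι R : Type*} [NormedCommRing R] [NormOneClass R] (s : Finset ι)
    {x y : ι → R} (hx : ∀ i ∈ s, ‖x i‖ ≤ 1) (hy : ∀ i ∈ s, ‖y i‖ ≤ 1) :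
    ‖∏ i ∈ s, x i - ∏ i ∈ s, y i‖ ≤ ∑ i ∈ s, ‖x i - y i‖ := by
  classical
  induction s using Finset.induction_on with
  | empty => simp
  | insert a s ha ih =>
    simp only [Finset.mem_insert, forall_eq_or_imp] at hx hy
    rw [Finset.prod_insert ha, Finset.prod_insert ha, Finset.sum_insert ha]
    have hprod : ‖∏ i ∈ s, y i‖ ≤ 1 :=
      (Finset.norm_prod_le _ _).trans (Finset.prod_le_one (fun _ _ => norm_nonneg _) hy.2)
    calc ‖x a * ∏ i ∈ s, x i - y a * ∏ i ∈ s, y i‖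
        = ‖x a * (∏ i ∈ s, x i - ∏ i ∈ s, y i) + (x a - y a) * ∏ i ∈ s, y i‖ := by ring_nf
      _ ≤ ‖x a‖ * ‖∏ i ∈ s, x i - ∏ i ∈ s, y i‖ + ‖x a - y a‖ * ‖∏ i ∈ s, y i‖ :=
        (norm_add_le _ _).trans (add_le_add (norm_mul_le _ _) (norm_mul_le _ _))
      _ ≤ 1 * ∑ i ∈ s, ‖x i - y i‖ + ‖x a - y a‖ * 1 := by
        gcongr
        exacts [hx.1, ih hx.2 hy.2]
      _ = ‖x a - y a‖ + ∑ i ∈ s, ‖x i - y i‖ := by ring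

theorem lipschitzWith_sum_mul_prod {κ : Type*} [Fintype κ] {ι : κ → Type*}
    [∀ k, Fintype (ι k)] (c : κ → ℝ) :
    LipschitzWith (∑ k, ‖c k‖₊ * Fintype.card (ι k))
      (fun x : (Σ k, ι k) → Icc (0 : ℝ) 1 => ∑ k, c k * ∏ i, (x ⟨k, i⟩ : ℝ)) := by
  refine LipschitzWith.of_dist_le_mul fun x y => ?_
  have hunit : ∀ (z : (Σ k, ι k) → Icc (0 : ℝ) 1) σ, ‖(z σ : ℝ)‖ ≤ 1 := fun z σ =>
    abs_le.2 ⟨by linarith [(z σ).2.1], (z σ).2.2⟩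
  calc dist (∑ k, c k * ∏ i, (x ⟨k, i⟩ : ℝ)) (∑ k, c k * ∏ i, (y ⟨k, i⟩ : ℝ))
      = ‖∑ k, c k * (∏ i, (x ⟨k, i⟩ : ℝ) - ∏ i, (y ⟨k, i⟩ : ℝ))‖ := by
        simp only [dist_eq_norm, mul_sub, Finset.sum_sub_distrib]
    _ ≤ ∑ k, ‖c k‖ * ∑ i, ‖(x ⟨k, i⟩ : ℝ) - y ⟨k, i⟩‖ := by
        refine (norm_sum_le _ _).trans (Finset.sum_le_sum fun k _ => ?_)
        rw [norm_mul]
        gcongr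
        exact norm_prod_sub_prod_le _ (fun i _ => hunit x _) (fun i _ => hunit y _)
    _ ≤ ∑ k, ‖c k‖ * ∑ _i : ι k, dist x y := by
        gcongr with k _ i
        exact dist_le_pi_dist x y ⟨k, i⟩
    _ = ↑(∑ k, ‖c k‖₊ * Fintype.card (ι k)) * dist x y := by
        push_cast
        simp [Finset.sum_mul, mul_assoc]

theorem stmt15 :
    IsMeagre {A : TopologicalSpace.NonemptyCompacts (Set.Icc (0 : ℝ) 1) |
      ¬ ∀ (n : ℕ) (a : ℕ → ℝ),
          dimH {s : ℝ | ∃ x : (k : Fin (n + 1)) → Fin (k : ℕ) → Set.Icc (0 : ℝ) 1,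
            (∀ k i, x k i ∈ A) ∧
            s = ∑ k : Fin (n + 1), a k * ∏ i : Fin (k : ℕ), (x k i : ℝ)} = 0} := by
  refine mem_of_superset residual_setOf_hasLowerBoxDimZero fun A hA => ?_
  rw [mem_compl_iff, mem_ofPred_eq, not_not]
  intro n a
  let cube := univ.pi fun _ : (Σ k : Fin (n + 1), Fin k) => (A : Set (Icc (0 : ℝ) 1))
  have hsub : {s : ℝ | ∃ x : (k : Fin (n + 1)) → Fin (k : ℕ) → Set.Icc (0 : ℝ) 1,
      (∀ k i, x k i ∈ A) ∧ s = ∑ k : Fin (n + 1), a k * ∏ i : Fin (k : ℕ), (x k i : ℝ)} ⊆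
      (fun x => ∑ k : Fin (n + 1), a k * ∏ i : Fin k, (x ⟨k, i⟩ : ℝ)) '' cube := by
    rintro s ⟨x, hxA, rfl⟩
    exact ⟨Sigma.uncurry x, fun σ _ => hxA σ.1 σ.2, rfl⟩
  have hcube : dimH cube = 0 := HasLowerBoxDimZero.dimH_eq_zero hA.pi
  refine nonpos_iff_eq_zero.1 ((dimH_mono hsub).trans ?_)
  exact ((lipschitzWith_sum_mul_prod (ι := fun k : Fin (n + 1) => Fin k) _).dimH_image_le
    cube).trans hcube.le
end

section
/- Fix x ∈ [0,1]. A subset A ⊆ {x} × ℝ is nowhere dense in the vertical line V_x = {x} × ℝ if and only if C_A = {f ∈ C([0,1]) : (x, f(x)) ∈ A} is nowhere dense in C([0,1]) with the supremum metric. -/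
open Function

theorem IsOpenMap.isNowhereDense_preimage_iff {X Y : Type*} [TopologicalSpace X]
    [TopologicalSpace Y] {f : X → Y} (hfo : IsOpenMap f) (hfc : Continuous f)
    (hfs : Surjective f) {s : Set Y} :
    IsNowhereDense (f ⁻¹' s) ↔ IsNowhereDense s := by
  rw [IsNowhereDense, IsNowhereDense, ← hfo.preimage_closure_eq_closure_preimage hfc,
    ← hfo.preimage_interior_eq_interior_preimage hfc, ← Set.preimage_empty,
    hfs.preimage_injective.eq_iff]

theorem ContinuousMap.surjective_eval_const {X E : Type*} [TopologicalSpace X]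
    [TopologicalSpace E] (x : X) : Surjective fun f : C(X, E) ↦ f x :=
  fun e ↦ ⟨.const X e, rfl⟩

theorem ContinuousMap.isOpenMap_eval_const {X E : Type*} [TopologicalSpace X] [CompactSpace X]
    [NormedAddCommGroup E] [NormedSpace ℝ E] [CompleteSpace E] (x : X) :
    IsOpenMap fun f : C(X, E) ↦ f x :=
  (ContinuousMap.evalCLM ℝ x : C(X, E) →L[ℝ] E).isOpenMap (surjective_eval_const x)

theorem stmt18 (x : Set.Icc (0 : ℝ) 1) (A : Set ℝ) :
    IsNowhereDense A ↔
      IsNowhereDense {f : C(Set.Icc (0 : ℝ) 1, ℝ) | f x ∈ A} :=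
  ((ContinuousMap.isOpenMap_eval_const x).isNowhereDense_preimage_iff
    (continuous_eval_const x) (ContinuousMap.surjective_eval_const x)).symm
end

section
/- The graph of a typical continuous function f ∈ C([0,1]) contains no point with both coordinates rational; i.e., the set of f ∈ C([0,1]) whose graph contains a rational point of the plane is of first category in C([0,1]). -/
/-! Evaluation at a point `t` is continuous, so `{f | f t = c}` is closed, and it has empty
interior because the vertical translates `f + e` (`e ≠ 0`, `e → 0`) approach `f` from outside it.
The functions whose graph meets `ℚ × ℚ` form the countable union of these sets over rational
`t` and `c`. -/

open Set Filter Topology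

namespace ContinuousMap

variable {X E : Type*} [TopologicalSpace X] [TopologicalSpace E] [AddLeftCancelMonoid E]
  [ContinuousAdd E] [T1Space E] [(𝓝[≠] (0 : E)).NeBot]

theorem isNowhereDense_setOf_apply_eq (x : X) (c : E) :
    IsNowhereDense {f : C(X, E) | f x = c} := by
  have hclosed : IsClosed {f : C(X, E) | f x = c} :=
    isClosed_singleton.preimage (continuous_eval_const x)
  rw [hclosed.isNowhereDense_iff, eq_empty_iff_forall_notMem]
  intro f hf
  have hfx : f x = c := interior_subset (s := {f : C(X, E) | f x = c}) hf
  let shift (e : E) : C(X, E) := ⟨fun y ↦ f y + e, by fun_prop⟩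
  have hshift : Continuous shift := continuous_of_continuous_uncurry _ <|
    (f.continuous.comp continuous_snd).add continuous_fst
  have hnear : ∀ᶠ e in 𝓝 (0 : E), shift e x = c :=
    hshift.tendsto' 0 f (by ext; simp [shift]) |>.eventually (mem_interior_iff_mem_nhds.mp hf)
  obtain ⟨e, he, hne⟩ :=
    ((hnear.filter_mono nhdsWithin_le_nhds).and (self_mem_nhdsWithin (s := {0}ᶜ))).exists
  exact hne (by simpa [shift, hfx] using he)

theorem isMeagre_setOf_exists_apply_mem {T : Set X} (hT : T.Countable) {C : Set E}
    (hC : C.Countable) : IsMeagre {f : C(X, E) | ∃ t ∈ T, f t ∈ C} := by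
  have : {f : C(X, E) | ∃ t ∈ T, f t ∈ C} = ⋃ t ∈ T, ⋃ c ∈ C, {f | f t = c} := by
    ext f; simp
  rw [this]
  exact isMeagre_biUnion hT fun t _ ↦ isMeagre_biUnion hC fun c _ ↦
    (isNowhereDense_setOf_apply_eq t c).isMeagre

end ContinuousMap

theorem stmt19 :
    IsMeagre {f : C(Set.Icc (0 : ℝ) 1, ℝ) |
      ∃ t : Set.Icc (0 : ℝ) 1, (∃ q : ℚ, (q : ℝ) = (t : ℝ)) ∧ ∃ q : ℚ, (q : ℝ) = f t} :=
  ContinuousMap.isMeagre_setOf_exists_apply_mem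
    ((countable_range ((↑) : ℚ → ℝ)).preimage Subtype.val_injective) (countable_range _)
end
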